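/- Let s : ℕ → (0,∞) and let γ assign to each finite subset of ℕ a positive real number. For a multi-index j define a_j := γ(supp(j))⁻¹ · ∏_{k ∈ supp(j)} 2^{2 s_k j_k}. Then for every multi-index i, a_i · ∑_{j ≥ i} a_j⁻¹ ≥ ∏_{k ∈ supp(i)} (1 − 2^{−2 s_k})⁻¹, where the sum on the left runs over all multi-indices j with j_k ≥ i_k for all k and is taken in [0,∞]. In particular, if sup_i ( a_i · ∑_{j ≥ i} a_j⁻¹ ) < ∞, then ∑_{k∈ℕ} 2^{−2 s_k} < ∞. -/

import Mathlib

open scoped ENNReal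

/-- The Sobolev-type tensor product weights of Section 4:
`a_j = γ(supp j)⁻¹ ∏_{k ∈ supp j} 2^{2 s_k j_k}`. -/
noncomputable def sobolevWeight (s : ℕ → ℝ) (γ : Finset ℕ → ℝ) (j : ℕ →₀ ℕ) : ℝ :=
  (γ j.support)⁻¹ * ∏ k ∈ j.support, (2 : ℝ) ^ (2 * s k * (j k : ℝ))

/-!
Write a multi-index `j ≥ i` with `supp j = supp i` as `j = i + μ` with `supp μ ⊆ supp i`.
Then `γ` cancels and `a_i / a_{i+μ} = ∏_{k ∈ supp i} q_k ^ μ_k` with `q_k = 2^{-2 s_k} < 1`,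
so this part of the tail sum already factors into the geometric series `∏_k (1 - q_k)⁻¹`.
For the multi-index with entries `1` on a finite set `F`, a uniform bound `C` on the left-hand
side and `exp q ≤ (1 - q)⁻¹` give `∑_{k ∈ F} q_k ≤ log C`.
-/

namespace Finsupp

variable {ι M : Type*} [DecidableEq ι] [AddCommMonoid M]

noncomputable def consSupportedEquiv {a : ι} {F : Finset ι} (ha : a ∉ F) :
    M × {ν : ι →₀ M // ν.support ⊆ F} ≃ {μ : ι →₀ M // μ.support ⊆ F.cons a ha} where
  toFun p := ⟨single a p.1 + p.2, support_add.trans <| Finset.union_subset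
    (support_single_subset.trans (by simp)) (p.2.2.trans (Finset.subset_cons ha))⟩
  invFun μ := (μ.1 a, ⟨μ.1.erase a, fun k hk => by
    rw [support_erase, Finset.mem_erase] at hk
    exact (Finset.mem_cons.mp (μ.2 hk.2)).resolve_left hk.1⟩)
  left_inv := by
    rintro ⟨m, ν, hν⟩
    have hνa : ν a = 0 := notMem_support_iff.mp fun h => ha (hν h)
    refine Prod.ext (by simp [hνa]) (Subtype.ext ?_)
    ext k
    obtain rfl | hk := eq_or_ne k a
    · simp [hνa]
    · simp [erase_ne hk]
  right_inv μ := Subtype.ext (single_add_erase a μ.1)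

theorem tsum_prod_apply_of_support_subset (F : Finset ι) (G : ι → M → ℝ≥0∞) :
    ∑' μ : {μ : ι →₀ M // μ.support ⊆ F}, ∏ k ∈ F, G k (μ.1 k) = ∏ k ∈ F, ∑' m, G k m := by
  induction F using Finset.cons_induction with
  | empty =>
    have : Unique {μ : ι →₀ M // μ.support ⊆ ∅} :=
      ⟨⟨⟨0, by simp⟩⟩, fun μ => Subtype.ext (support_eq_empty.mp (Finset.subset_empty.mp μ.2))⟩
    simp
  | cons a F ha ih =>
    have hsplit : ∀ (m : M) (ν : {ν : ι →₀ M // ν.support ⊆ F}),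
        ∏ k ∈ F.cons a ha, G k ((consSupportedEquiv ha (m, ν)).1 k) =
          G a m * ∏ k ∈ F, G k (ν.1 k) := by
      intro m ν
      have hνa : ν.1 a = 0 := notMem_support_iff.mp fun h => ha (ν.2 h)
      rw [Finset.prod_cons]
      congr 1
      · simp [consSupportedEquiv, hνa]
      · refine Finset.prod_congr rfl fun k hk => ?_
        have hka : k ≠ a := ne_of_mem_of_not_mem hk ha
        simp [consSupportedEquiv, single_eq_of_ne hka]
    rw [← (consSupportedEquiv ha).tsum_eq, ENNReal.tsum_prod', Finset.prod_cons, ← ih,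
      ← ENNReal.tsum_mul_right]
    simp_rw [hsplit, ENNReal.tsum_mul_left]

end Finsupp

theorem Real.exp_le_inv_one_sub {x : ℝ} (hx : x < 1) : Real.exp x ≤ (1 - x)⁻¹ := by
  rw [← inv_inv (Real.exp x), ← Real.exp_neg]
  exact inv_anti₀ (sub_pos.mpr hx) (Real.one_sub_le_exp_neg x)

theorem summable_of_prod_inv_one_sub_le {ι : Type*} {x : ι → ℝ} {C : ℝ} (hx0 : ∀ k, 0 ≤ x k)
    (hx1 : ∀ k, x k < 1) (hC : ∀ F : Finset ι, ∏ k ∈ F, (1 - x k)⁻¹ ≤ C) : Summable x := by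
  have hexp : ∀ F : Finset ι, Real.exp (∑ k ∈ F, x k) ≤ C := fun F =>
    calc Real.exp (∑ k ∈ F, x k) = ∏ k ∈ F, Real.exp (x k) := Real.exp_sum F x
      _ ≤ ∏ k ∈ F, (1 - x k)⁻¹ :=
        Finset.prod_le_prod (fun k _ => (Real.exp_pos _).le) fun k _ =>
          Real.exp_le_inv_one_sub (hx1 k)
      _ ≤ C := hC F
  have hC0 : 0 < C := (Real.exp_pos _).trans_le (hexp ∅)
  exact summable_of_sum_le hx0 fun F => (Real.le_log_iff_exp_le hC0).mpr (hexp F)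

theorem two_rpow_neg_two_mul_lt_one {t : ℝ} (ht : 0 < t) : (2 : ℝ) ^ (-(2 * t)) < 1 :=
  Real.rpow_lt_one_of_one_lt_of_neg one_lt_two (by linarith)

section SobolevWeight

variable (s : ℕ → ℝ) (γ : Finset ℕ → ℝ)

/-- `a_i â_i⁻¹` in the paper's notation. -/
noncomputable def sobolevTailRatio (i : ℕ →₀ ℕ) : ℝ≥0∞ :=
  ENNReal.ofReal (sobolevWeight s γ i) *
    ∑' j : {j : ℕ →₀ ℕ // i ≤ j}, ENNReal.ofReal (sobolevWeight s γ j)⁻¹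

theorem sobolevWeight_nonneg {i : ℕ →₀ ℕ} (hγ : 0 ≤ γ i.support) : 0 ≤ sobolevWeight s γ i :=
  mul_nonneg (inv_nonneg.mpr hγ) (Finset.prod_nonneg fun _ _ => by positivity)

theorem sobolevWeight_mul_inv_add {i μ : ℕ →₀ ℕ} (hγ : γ i.support ≠ 0)
    (hμ : μ.support ⊆ i.support) :
    sobolevWeight s γ i * (sobolevWeight s γ (i + μ))⁻¹ =
      ∏ k ∈ i.support, ((2 : ℝ) ^ (-(2 * s k))) ^ μ k := by
  have hsupp : (i + μ).support = i.support := by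
    classical rw [Finsupp.support_add_eq_union, Finset.union_eq_left.mpr hμ]
  rw [sobolevWeight, sobolevWeight, hsupp, mul_inv, inv_inv, mul_mul_mul_comm,
    inv_mul_cancel₀ hγ, one_mul, ← Finset.prod_inv_distrib, ← Finset.prod_mul_distrib]
  refine Finset.prod_congr rfl fun k _ => ?_
  rw [← Real.rpow_neg zero_le_two, ← Real.rpow_add two_pos, ← Real.rpow_natCast,
    ← Real.rpow_mul zero_le_two]
  push_cast [Finsupp.add_apply]
  ring_nf

theorem ofReal_prod_inv_one_sub_le_sobolevTailRatio (hs : ∀ k, 0 < s k) (i : ℕ →₀ ℕ)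
    (hγ : 0 < γ i.support) :
    ENNReal.ofReal (∏ k ∈ i.support, (1 - (2 : ℝ) ^ (-(2 * s k)))⁻¹) ≤ sobolevTailRatio s γ i := by
  set q : ℕ → ℝ := fun k => (2 : ℝ) ^ (-(2 * s k))
  have hq0 : ∀ k, 0 ≤ q k := fun k => (Real.rpow_pos_of_pos two_pos _).le
  have hq1 : ∀ k, q k < 1 := fun k => two_rpow_neg_two_mul_lt_one (hs k)
  calc ENNReal.ofReal (∏ k ∈ i.support, (1 - q k)⁻¹)
      = ∏ k ∈ i.support, ∑' n : ℕ, ENNReal.ofReal (q k) ^ n := by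
        rw [ENNReal.ofReal_prod_of_nonneg fun k _ => (inv_pos.mpr (sub_pos.mpr (hq1 k))).le]
        refine Finset.prod_congr rfl fun k _ => ?_
        rw [ENNReal.tsum_geometric, ENNReal.ofReal_inv_of_pos (sub_pos.mpr (hq1 k)),
          ENNReal.ofReal_sub 1 (hq0 k), ENNReal.ofReal_one]
    _ = ∑' μ : {μ : ℕ →₀ ℕ // μ.support ⊆ i.support},
          ENNReal.ofReal (sobolevWeight s γ i) * ENNReal.ofReal (sobolevWeight s γ (i + μ))⁻¹ := by
        rw [← Finsupp.tsum_prod_apply_of_support_subset]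
        refine tsum_congr fun μ => ?_
        rw [← ENNReal.ofReal_mul (sobolevWeight_nonneg s γ hγ.le),
          sobolevWeight_mul_inv_add s γ hγ.ne' μ.2,
          ENNReal.ofReal_prod_of_nonneg fun k _ => pow_nonneg (hq0 k) _]
        exact Finset.prod_congr rfl fun k _ => (ENNReal.ofReal_pow (hq0 k) _).symm
    _ ≤ sobolevTailRatio s γ i := by
        rw [sobolevTailRatio, ENNReal.tsum_mul_left]
        gcongr
        let shift : {μ : ℕ →₀ ℕ // μ.support ⊆ i.support} → {j : ℕ →₀ ℕ // i ≤ j} :=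
          fun μ => ⟨i + μ.1, le_self_add⟩
        have hshift : shift.Injective := fun μ ν h => Subtype.ext (add_left_cancel congr($h.1))
        exact ENNReal.tsum_comp_le_tsum_of_injective hshift
          fun j => ENNReal.ofReal (sobolevWeight s γ j)⁻¹

end SobolevWeight

/-- Section 4, necessity of the growth condition.
For the weights `a_j = γ(supp j)⁻¹ ∏_{k ∈ supp j} 2^{2 s_k j_k}` (with `s > 0`, `γ > 0`),
one has `a_i ∑_{j ≥ i} a_j⁻¹ ≥ ∏_{k ∈ supp i} (1 - 2^{-2 s_k})⁻¹` for every multi-index `i`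
(sums taken in `[0,∞]`), and in particular, if `sup_i (a_i ∑_{j ≥ i} a_j⁻¹) < ∞` then
`∑_k 2^{-2 s_k} < ∞`. -/
theorem stmt11 (s : ℕ → ℝ) (hs : ∀ k, 0 < s k) (γ : Finset ℕ → ℝ) (hγ : ∀ ω, 0 < γ ω) :
    (∀ i : ℕ →₀ ℕ,
      ENNReal.ofReal (∏ k ∈ i.support, (1 - (2 : ℝ) ^ (-(2 * s k)))⁻¹) ≤
        ENNReal.ofReal (sobolevWeight s γ i) *
          ∑' j : {j : ℕ →₀ ℕ // i ≤ j},
            ENNReal.ofReal ((sobolevWeight s γ (j : ℕ →₀ ℕ))⁻¹)) ∧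
    ((⨆ i : ℕ →₀ ℕ, ENNReal.ofReal (sobolevWeight s γ i) *
          ∑' j : {j : ℕ →₀ ℕ // i ≤ j},
            ENNReal.ofReal ((sobolevWeight s γ (j : ℕ →₀ ℕ))⁻¹)) < ⊤ →
      Summable fun k => (2 : ℝ) ^ (-(2 * s k))) := by
  have hlower (i : ℕ →₀ ℕ) := ofReal_prod_inv_one_sub_le_sobolevTailRatio s γ hs i (hγ _)
  refine ⟨hlower, fun hbdd => ?_⟩
  refine summable_of_prod_inv_one_sub_le (C := (⨆ i, sobolevTailRatio s γ i).toReal)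
    (fun k => (Real.rpow_pos_of_pos two_pos _).le) (fun k => two_rpow_neg_two_mul_lt_one (hs k))
    fun F => (ENNReal.ofReal_le_iff_le_toReal hbdd.ne).mp ?_
  -- `F.val.toFinsupp` is the multi-index equal to `1` on `F` and `0` elsewhere
  have hF := (hlower F.val.toFinsupp).trans (le_iSup _ _)
  rwa [Multiset.toFinsupp_support, Finset.val_toFinset] at hF
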